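/- arXiv:2202.10662 — 4 statements merged into one kernel-verified Lean document; each statement's English description precedes it below -/
import Mathlib

section
/- Let N be a δ-net in operator norm of the orthogonal group O(d). Then for any real d×d matrix A, max_{Q ∈ N} ⟨A, Q⟩ ≥ (1 − δ²/2) ‖A‖_*, where ‖A‖_* denotes the nuclear norm (sum of singular values) and ⟨A,Q⟩ = trace(AᵀQ). -/
open Matrix

/-- Operator (spectral) norm of a square real matrix. -/
noncomputable def opNorm {d : ℕ} (A : Matrix (Fin d) (Fin d) ℝ) : ℝ :=
  ‖Matrix.toEuclideanCLM (𝕜 := ℝ) A‖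

/-- Nuclear norm: sum of the singular values of `A`. -/
noncomputable def nuclearNorm {d : ℕ} (A : Matrix (Fin d) (Fin d) ℝ) : ℝ :=
  ∑ i, Real.sqrt ((Matrix.isHermitian_conjTranspose_mul_self A).eigenvalues i)

/-- Matrix inner product `⟨A, B⟩ = trace (Aᵀ B)`. -/
def mip {d : ℕ} (A B : Matrix (Fin d) (Fin d) ℝ) : ℝ := (Aᵀ * B).trace

/-!
Let `Q₀` maximize `Q ↦ ⟨A, Q⟩` over the compact group `O(d)`. Comparing `Q₀` with `Q₀ exp (t K)`
for skew `K` and with `Q₀ H` for Householder reflections `H` shows that `M = Aᵀ Q₀` is symmetric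
positive semidefinite; since `M² = Aᵀ A`, `tr M = ‖A‖_*`. For a net point `Q` with
`E = Q₀ - Q`, orthogonality gives `tr (M Eᵀ E) = 2 (tr M - ⟨A, Q⟩)`, while `‖E‖ ≤ δ` means
`Eᵀ E ≤ δ²` in the Loewner order, so `tr (M Eᵀ E) ≤ δ² tr M` because `M ≥ 0`.
-/

namespace Matrix

variable {n : Type*} [Fintype n] [DecidableEq n]

open scoped MatrixOrder ComplexOrder in
theorem PosSemidef.trace_mul_nonneg {𝕜 : Type*} [RCLike 𝕜] {A B : Matrix n n 𝕜}
    (hA : A.PosSemidef) (hB : B.PosSemidef) : 0 ≤ (A * B).trace := by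
  set S := CFC.sqrt A
  have hS : Sᴴ = S := (CFC.sqrt_nonneg A).posSemidef.isHermitian
  have hA' : A = S * S := (CFC.sqrt_mul_sqrt_self A hA.nonneg).symm
  calc (0 : 𝕜) ≤ (S * B * Sᴴ).trace := (hB.mul_mul_conjTranspose_same S).trace_nonneg
    _ = (A * B).trace := by rw [hS, trace_mul_cycle, ← hA']

theorem PosSemidef.trace_mul_le_of_posSemidef_smul_one_sub {A B : Matrix n n ℝ} {c : ℝ}
    (hA : A.PosSemidef) (hB : (c • 1 - B).PosSemidef) : (A * B).trace ≤ c * A.trace := by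
  have := hA.trace_mul_nonneg hB
  rwa [mul_sub, trace_sub, Matrix.mul_smul, mul_one, trace_smul, smul_eq_mul, sub_nonneg] at this

theorem isCompact_orthogonalGroup : IsCompact (orthogonalGroup n ℝ : Set (Matrix n n ℝ)) := by
  have hclosed : IsClosed (orthogonalGroup n ℝ : Set (Matrix n n ℝ)) := by
    have : (orthogonalGroup n ℝ : Set (Matrix n n ℝ)) = {Q | Qᵀ * Q = 1} := by
      ext; exact mem_orthogonalGroup_iff' ..
    rw [this]
    exact isClosed_eq (by fun_prop) continuous_const
  have hbox : IsCompact (Set.univ.pi fun _ : n => Set.univ.pi fun _ : n => Set.Icc (-1 : ℝ) 1) :=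
    isCompact_univ_pi fun _ => isCompact_univ_pi fun _ => isCompact_Icc
  exact hbox.of_isClosed_subset hclosed fun Q hQ i _ j _ =>
    abs_le.mp (entry_norm_bound_of_unitary hQ i j)

theorem exists_forall_trace_mul_orthogonalGroup_le (B : Matrix n n ℝ) :
    ∃ Q₀ ∈ orthogonalGroup n ℝ, ∀ Q ∈ orthogonalGroup n ℝ, (B * Q).trace ≤ (B * Q₀).trace :=
  isCompact_orthogonalGroup.exists_isMaxOn ⟨1, one_mem _⟩
    (continuous_const.matrix_mul continuous_id).matrix_trace.continuousOn

theorem one_sub_smul_vecMulVec_mem_orthogonalGroup {x : n → ℝ} (hx : x ≠ 0) :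
    1 - (2 / (x ⬝ᵥ x)) • vecMulVec x x ∈ orthogonalGroup n ℝ := by
  have hxx : x ⬝ᵥ x ≠ 0 := fun h => hx (dotProduct_self_eq_zero.mp h)
  rw [mem_orthogonalGroup_iff', transpose_sub, transpose_one, transpose_smul,
    transpose_vecMulVec]
  simp only [sub_mul, mul_sub, mul_one, one_mul, Matrix.smul_mul, Matrix.mul_smul, smul_smul,
    vecMulVec_mul_vecMulVec, vecMulVec_smul]
  have : 2 / (x ⬝ᵥ x) * (2 / (x ⬝ᵥ x) * (x ⬝ᵥ x)) = 2 / (x ⬝ᵥ x) + 2 / (x ⬝ᵥ x) := by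
    field_simp; ring
  rw [this, add_smul]
  abel

open NormedSpace in
theorem exp_mem_orthogonalGroup {K : Matrix n n ℝ} (hK : Kᵀ = -K) :
    exp K ∈ orthogonalGroup n ℝ := by
  rw [mem_orthogonalGroup_iff', ← exp_transpose, hK,
    ← exp_add_of_commute _ _ (Commute.refl K).neg_left, neg_add_cancel, exp_zero]

section MaximalTrace

variable {M : Matrix n n ℝ}

attribute [local instance] Matrix.linftyOpNormedAddCommGroup Matrix.linftyOpNormedRing
  Matrix.linftyOpNormedAlgebra in
open NormedSpace in
theorem trace_mul_eq_zero_of_forall_trace_mul_le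
    (hM : ∀ R ∈ orthogonalGroup n ℝ, (M * R).trace ≤ M.trace) {K : Matrix n n ℝ}
    (hK : Kᵀ = -K) : (M * K).trace = 0 := by
  have hexp : HasDerivAt (fun t : ℝ => exp (t • K)) (exp ((0 : ℝ) • K) * K) 0 :=
    hasDerivAt_exp_smul_const K 0
  rw [zero_smul, exp_zero, one_mul] at hexp
  have hderiv : HasDerivAt (fun t : ℝ => (M * exp (t • K)).trace) (M * K).trace 0 :=
    ((traceLinearMap n ℝ ℝ).toContinuousLinearMap.hasFDerivAt.comp_hasDerivAt 0
      (hexp.const_mul M) :)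
  refine IsLocalMax.hasDerivAt_eq_zero (Filter.Eventually.of_forall fun t => ?_) hderiv
  simpa using hM _ (exp_mem_orthogonalGroup (by rw [transpose_smul, hK, smul_neg]))

theorem transpose_eq_of_forall_trace_mul_le
    (hM : ∀ R ∈ orthogonalGroup n ℝ, (M * R).trace ≤ M.trace) : Mᵀ = M := by
  set S := M - Mᵀ
  have hS : Sᵀ = -S := by simp [S]
  have hMS : (M * S).trace = 0 := trace_mul_eq_zero_of_forall_trace_mul_le hM hS
  have hTS : (Mᵀ * S).trace = -(M * S).trace := by
    rw [← trace_transpose, transpose_mul, transpose_transpose, hS, neg_mul, trace_neg,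
      trace_mul_comm]
  have : (S * Sᴴ).trace = 0 := by
    rw [conjTranspose_eq_transpose_of_trivial, hS, mul_neg, trace_neg, sub_mul, trace_sub, hTS,
      hMS]
    ring
  exact (sub_eq_zero.mp (trace_mul_conjTranspose_self_eq_zero_iff.mp this)).symm

theorem posSemidef_of_forall_trace_mul_le
    (hM : ∀ R ∈ orthogonalGroup n ℝ, (M * R).trace ≤ M.trace) : M.PosSemidef := by
  refine .of_dotProduct_mulVec_nonneg ?_ fun x => ?_
  · rw [IsHermitian, conjTranspose_eq_transpose_of_trivial]
    exact transpose_eq_of_forall_trace_mul_le hM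
  rw [star_trivial]
  rcases eq_or_ne x 0 with rfl | hx
  · simp
  have hxx : 0 < x ⬝ᵥ x := lt_of_le_of_ne (by simpa using dotProduct_star_self_nonneg x)
    (Ne.symm (dotProduct_self_eq_zero.not.mpr hx))
  have := hM _ (one_sub_smul_vecMulVec_mem_orthogonalGroup hx)
  rw [mul_sub, mul_one, trace_sub, Matrix.mul_smul, trace_smul, mul_vecMulVec, trace_vecMulVec,
    smul_eq_mul, sub_le_self_iff] at this
  rw [dotProduct_comm]
  exact (mul_nonneg_iff_of_pos_left (by positivity)).mp this

end MaximalTrace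

theorem IsHermitian.trace_cfc {𝕜 : Type*} [RCLike 𝕜] {A : Matrix n n 𝕜} (hA : A.IsHermitian)
    (f : ℝ → ℝ) : (cfc f A).trace = ∑ i, (f (hA.eigenvalues i) : 𝕜) := by
  rw [hA.cfc_eq, IsHermitian.cfc, Unitary.conjStarAlgAut_apply, trace_mul_cycle,
    Unitary.coe_star_mul_self, one_mul, trace_diagonal]
  rfl

theorem trace_mul_transpose_sub_mul_sub {A Q₀ Q : Matrix n n ℝ} (hQ₀ : Q₀ ∈ orthogonalGroup n ℝ)
    (hQ : Q ∈ orthogonalGroup n ℝ) (hsymm : (Aᵀ * Q₀)ᵀ = Aᵀ * Q₀) :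
    (Aᵀ * Q₀ * ((Q₀ - Q)ᵀ * (Q₀ - Q))).trace = 2 * ((Aᵀ * Q₀).trace - (Aᵀ * Q).trace) := by
  have hcross : (Aᵀ * Q₀ * (Q₀ᵀ * Q)).trace = (Aᵀ * Q).trace := by
    rw [mul_assoc, ← mul_assoc Q₀, (mem_orthogonalGroup_iff _ _).mp hQ₀, one_mul]
  have hcross' : (Aᵀ * Q₀ * (Qᵀ * Q₀)).trace = (Aᵀ * Q).trace := by
    rw [← hcross, ← trace_transpose, transpose_mul, transpose_mul, hsymm, transpose_transpose,
      trace_mul_comm]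
  have hexpand : (Q₀ - Q)ᵀ * (Q₀ - Q) = (2 : ℝ) • 1 - Q₀ᵀ * Q - Qᵀ * Q₀ := by
    rw [transpose_sub, sub_mul, mul_sub, mul_sub, (mem_orthogonalGroup_iff' _ _).mp hQ₀,
      (mem_orthogonalGroup_iff' _ _).mp hQ, two_smul]
    abel
  rw [hexpand, mul_sub, mul_sub, trace_sub, trace_sub, hcross, hcross', Matrix.mul_smul,
    trace_smul, mul_one, smul_eq_mul]
  ring

end Matrix

section FinDim

variable {d : ℕ}

open scoped MatrixOrder in
theorem Matrix.PosSemidef.trace_eq_nuclearNorm {A M : Matrix (Fin d) (Fin d) ℝ}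
    (hM : M.PosSemidef) (hMA : M * M = Aᵀ * A) : M.trace = nuclearNorm A := by
  have hAA : Aᵀ * A = Aᴴ * A := by rw [conjTranspose_eq_transpose_of_trivial]
  rw [hAA] at hMA
  rw [← CFC.sqrt_unique hMA hM.nonneg,
    CFC.sqrt_eq_real_sqrt _ (posSemidef_conjTranspose_mul_self A).nonneg, cfcₙ_eq_cfc,
    (isHermitian_conjTranspose_mul_self A).trace_cfc]
  rfl

theorem posSemidef_sq_smul_one_sub_transpose_mul_self_of_opNorm_le
    {E : Matrix (Fin d) (Fin d) ℝ} {δ : ℝ} (hE : opNorm E ≤ δ) :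
    (δ ^ 2 • 1 - Eᵀ * E).PosSemidef := by
  refine .of_dotProduct_mulVec_nonneg ?_ fun x => ?_
  · simp [IsHermitian, conjTranspose_eq_transpose_of_trivial]
  have hnorm : ∀ y : Fin d → ℝ, ‖WithLp.toLp 2 y‖ ^ 2 = y ⬝ᵥ y := fun y => by
    rw [← real_inner_self_eq_norm_sq, EuclideanSpace.inner_toLp_toLp, star_trivial]
  have hle : ‖toEuclideanCLM (𝕜 := ℝ) E (WithLp.toLp 2 x)‖ ≤ δ * ‖WithLp.toLp 2 x‖ :=
    (ContinuousLinearMap.le_opNorm _ _).trans (mul_le_mul_of_nonneg_right hE (norm_nonneg _))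
  have hEx : (E *ᵥ x) ⬝ᵥ (E *ᵥ x) ≤ δ ^ 2 * (x ⬝ᵥ x) := by
    rw [← hnorm, ← hnorm, ← toEuclideanCLM_toLp, ← mul_pow]
    exact pow_le_pow_left₀ (norm_nonneg _) hle 2
  rw [star_trivial, sub_mulVec, smul_mulVec, one_mulVec, dotProduct_sub, dotProduct_smul,
    ← mulVec_mulVec, dotProduct_mulVec, vecMul_transpose, smul_eq_mul, sub_nonneg]
  exact hEx

end FinDim

/-- If `N` is a `δ`-net in operator norm of the orthogonal group `O(d)`, then for any real
`d × d` matrix `A`, `max_{Q ∈ N} ⟨A, Q⟩ ≥ (1 - δ²/2) ‖A‖_*`. -/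
theorem stmt0 {d : ℕ} (δ : ℝ) (N : Set (Matrix (Fin d) (Fin d) ℝ))
    (hN_sub : ∀ Q ∈ N, Q ∈ Matrix.orthogonalGroup (Fin d) ℝ)
    (hN_net : ∀ Q ∈ Matrix.orthogonalGroup (Fin d) ℝ, ∃ Q' ∈ N, opNorm (Q - Q') ≤ δ)
    (A : Matrix (Fin d) (Fin d) ℝ) :
    ∃ Q ∈ N, (1 - δ ^ 2 / 2) * nuclearNorm A ≤ mip A Q := by
  obtain ⟨Q₀, hQ₀, hQ₀max⟩ := exists_forall_trace_mul_orthogonalGroup_le Aᵀ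
  set M := Aᵀ * Q₀
  have hM : ∀ R ∈ orthogonalGroup (Fin d) ℝ, (M * R).trace ≤ M.trace := fun R hR => by
    simpa only [M, mul_assoc] using hQ₀max _ (mul_mem hQ₀ hR)
  have hsymm : Mᵀ = M := transpose_eq_of_forall_trace_mul_le hM
  have hpsd : M.PosSemidef := posSemidef_of_forall_trace_mul_le hM
  have htrace : M.trace = nuclearNorm A := hpsd.trace_eq_nuclearNorm <|
    calc M * M = M * Mᵀ := by rw [hsymm]
      _ = Aᵀ * (Q₀ * Q₀ᵀ) * A := by simp only [M, transpose_mul, transpose_transpose, mul_assoc]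
      _ = Aᵀ * A := by rw [(mem_orthogonalGroup_iff _ _).mp hQ₀, mul_one]
  obtain ⟨Q, hQN, hQ⟩ := hN_net Q₀ hQ₀
  refine ⟨Q, hQN, ?_⟩
  have hbound := hpsd.trace_mul_le_of_posSemidef_smul_one_sub
    (posSemidef_sq_smul_one_sub_transpose_mul_self_of_opNorm_le hQ)
  rw [trace_mul_transpose_sub_mul_sub hQ₀ (hN_sub Q hQN) hsymm, htrace] at hbound
  rw [mip]
  linarith
end

section
/- Let Q* ∈ O(d) and Q ∈ O(d) with Q = Q* + Δ. Let A ∈ ℝ^{d×d} have singular value decomposition A = U D Vᵀ with Q* = U Vᵀ, and set B = A Q*ᵀ. Then ⟨A, Δ⟩ = −(1/2) ⟨B, Δ Δᵀ⟩, and consequently |⟨A, Δ⟩| ≤ (1/2) ‖A‖_* ‖Δ‖_op². -/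
/-!
Expanding `(Q* + Δ)(Q* + Δ)ᵀ = 1` gives `ΔΔᵀ = -(Q*Δᵀ + ΔQ*ᵀ)`. Pairing this with the symmetric
matrix `B = U D Uᵀ`, and using `B Q* = A`, turns `⟨B, ΔΔᵀ⟩` into `-2 ⟨A, Δ⟩`.
For the bound, `⟨B, ΔΔᵀ⟩ = ∑ᵢ dᵢ ‖Δᵀ uᵢ‖²` where the `uᵢ` are the unit columns of `U`, each
`‖Δᵀ uᵢ‖² ≤ ‖Δ‖²_op`, and `∑ᵢ dᵢ = ‖A‖_*` because `√(AᵀA) = V D Vᵀ`.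
-/

open Matrix

section Perturbation

variable {n m R : Type*} [Fintype m] [CommRing R]

theorem mul_transpose_add_add_mul_transpose_eq_zero [DecidableEq n] {Qs Δ : Matrix n m R}
    (hQs : Qs * Qsᵀ = 1) (hQ : (Qs + Δ) * (Qs + Δ)ᵀ = 1) :
    Qs * Δᵀ + Δ * Qsᵀ + Δ * Δᵀ = 0 := by
  have : (Qs + Δ) * (Qs + Δ)ᵀ = Qs * Qsᵀ + (Qs * Δᵀ + Δ * Qsᵀ + Δ * Δᵀ) := by
    rw [transpose_add, Matrix.add_mul, Matrix.mul_add, Matrix.mul_add]; abel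
  rwa [hQ, hQs, left_eq_add] at this

theorem trace_mul_mul_transpose_eq_neg_two_mul [Fintype n] {B : Matrix n n R}
    {Qs Δ : Matrix n m R} (hB : Bᵀ = B) (hΔ : Qs * Δᵀ + Δ * Qsᵀ + Δ * Δᵀ = 0) :
    (B * (Δ * Δᵀ)).trace = -2 * ((B * Qs)ᵀ * Δ).trace := by
  have hΔΔ : Δ * Δᵀ = -(Qs * Δᵀ) - Δ * Qsᵀ := by
    rw [← sub_eq_zero, ← hΔ]; abel
  have h₁ : (B * (Qs * Δᵀ)).trace = ((B * Qs)ᵀ * Δ).trace := by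
    rw [← Matrix.mul_assoc, ← trace_transpose, transpose_mul, transpose_transpose,
      trace_mul_comm]
  have h₂ : (B * (Δ * Qsᵀ)).trace = ((B * Qs)ᵀ * Δ).trace := by
    rw [transpose_mul, hB, Matrix.mul_assoc, ← Matrix.mul_assoc B, trace_mul_comm]
  rw [hΔΔ, Matrix.mul_sub, Matrix.mul_neg, trace_sub, trace_neg, h₁, h₂]
  ring

theorem trace_conj_diagonal_mul_mul_transpose [Fintype n] [DecidableEq n] (U : Matrix n n R)
    (s : n → R) (Δ : Matrix n m R) :
    (U * diagonal s * Uᵀ * (Δ * Δᵀ)).trace =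
      ∑ i, s i * ((Δᵀ *ᵥ Uᵀ i) ⬝ᵥ (Δᵀ *ᵥ Uᵀ i)) := by
  have hrow : ∀ i, (Uᵀ * Δ) i = Δᵀ *ᵥ Uᵀ i := fun i => by
    ext k; simp [mul_apply, mulVec, dotProduct, mul_comm]
  calc (U * diagonal s * Uᵀ * (Δ * Δᵀ)).trace
      = (diagonal s * ((Uᵀ * Δ) * (Uᵀ * Δ)ᵀ)).trace := by
        rw [transpose_mul, transpose_transpose]
        simp only [Matrix.mul_assoc]
        rw [trace_mul_comm U]
        simp only [Matrix.mul_assoc]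
    _ = ∑ i, s i * ((Δᵀ *ᵥ Uᵀ i) ⬝ᵥ (Δᵀ *ᵥ Uᵀ i)) := by
        simp only [trace, diag_apply, diagonal_mul]
        simp only [mul_apply', transpose_apply, ← hrow]
        rfl

end Perturbation

section L2OperatorNorm

open scoped Matrix.Norms.L2Operator

variable {n m : Type*} [Fintype n] [Fintype m]

theorem EuclideanSpace.norm_toLp_sq {k : Type*} [Fintype k] (y : k → ℝ) :
    ‖WithLp.toLp 2 y‖ ^ 2 = y ⬝ᵥ y := by
  rw [EuclideanSpace.real_norm_sq_eq]
  simp [dotProduct, sq]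

theorem dotProduct_mulVec_self_le [DecidableEq n] (M : Matrix m n ℝ) (x : n → ℝ) :
    (M *ᵥ x) ⬝ᵥ (M *ᵥ x) ≤ ‖M‖ ^ 2 * (x ⬝ᵥ x) := by
  rw [← EuclideanSpace.norm_toLp_sq, ← EuclideanSpace.norm_toLp_sq, ← mul_pow]
  exact pow_le_pow_left₀ (norm_nonneg _) (l2_opNorm_mulVec M (WithLp.toLp 2 x)) 2

theorem abs_trace_conj_diagonal_mul_mul_transpose_le [DecidableEq n] [DecidableEq m]
    {U : Matrix n n ℝ} (hU : Uᵀ * U = 1) {s : n → ℝ} (hs : ∀ i, 0 ≤ s i) (Δ : Matrix n m ℝ) :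
    |(U * diagonal s * Uᵀ * (Δ * Δᵀ)).trace| ≤ (∑ i, s i) * ‖Δ‖ ^ 2 := by
  have hcol : ∀ i, Uᵀ i ⬝ᵥ Uᵀ i = 1 := fun i => by
    have := congrFun (congrFun hU i) i
    rwa [mul_apply', one_apply_eq] at this
  rw [trace_conj_diagonal_mul_mul_transpose, Finset.sum_mul]
  refine (Finset.abs_sum_le_sum_abs _ _).trans (Finset.sum_le_sum fun i _ => ?_)
  have hv := dotProduct_mulVec_self_le Δᵀ (Uᵀ i)
  rw [hcol, mul_one, ← conjTranspose_eq_transpose_of_trivial, l2_opNorm_conjTranspose] at hv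
  have hv₀ : 0 ≤ (Δᵀ *ᵥ Uᵀ i) ⬝ᵥ (Δᵀ *ᵥ Uᵀ i) := by
    simpa using dotProduct_star_self_nonneg (Δᵀ *ᵥ Uᵀ i)
  rw [abs_of_nonneg (mul_nonneg (hs i) hv₀)]
  exact mul_le_mul_of_nonneg_left hv (hs i)

end L2OperatorNorm

section NuclearNorm

open scoped MatrixOrder

theorem Matrix.PosSemidef.trace_sqrt {n : Type*} [Fintype n] [DecidableEq n] {M : Matrix n n ℝ}
    (hM : M.PosSemidef) : (CFC.sqrt M).trace = ∑ i, Real.sqrt (hM.1.eigenvalues i) := by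
  rw [CFC.sqrt_eq_cfc, cfc_nnreal_eq_real _ M, hM.1.cfc_eq, IsHermitian.cfc,
    Unitary.conjStarAlgAut_apply, trace_mul_comm, ← mul_assoc, Unitary.coe_star_mul_self]
  simp [trace_diagonal, max_eq_left (hM.eigenvalues_nonneg _)]

theorem nuclearNorm_eq_trace_sqrt {d : ℕ} (A : Matrix (Fin d) (Fin d) ℝ) :
    nuclearNorm A = (CFC.sqrt (Aᴴ * A)).trace :=
  (posSemidef_conjTranspose_mul_self A).trace_sqrt.symm

theorem nuclearNorm_mul_diagonal_mul_transpose {d : ℕ} {U V : Matrix (Fin d) (Fin d) ℝ}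
    (hU : Uᵀ * U = 1) (hV : Vᵀ * V = 1) {s : Fin d → ℝ} (hs : ∀ i, 0 ≤ s i) :
    nuclearNorm (U * diagonal s * Vᵀ) = ∑ i, s i := by
  have hS : (V * diagonal s * Vᵀ).PosSemidef := by
    simpa using (posSemidef_diagonal_iff.mpr hs).mul_mul_conjTranspose_same V
  have hgram : (U * diagonal s * Vᵀ)ᴴ * (U * diagonal s * Vᵀ) =
      (V * diagonal s * Vᵀ) * (V * diagonal s * Vᵀ) := by
    simp only [conjTranspose_eq_transpose_of_trivial, transpose_mul, transpose_transpose,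
      diagonal_transpose, mul_assoc]
    rw [← mul_assoc Uᵀ, hU, one_mul, ← mul_assoc Vᵀ, hV, one_mul]
  rw [nuclearNorm_eq_trace_sqrt, hgram, CFC.sqrt_mul_self _ hS.nonneg, trace_mul_cycle, hV,
    one_mul, trace_diagonal]

end NuclearNorm

/-- If `Q = Q* + Δ` with `Q, Q* ∈ O(d)`, `A = U D Vᵀ` is an SVD with `Q* = U Vᵀ`, and
`B = A Q*ᵀ`, then `⟨A, Δ⟩ = -(1/2) ⟨B, Δ Δᵀ⟩` and `|⟨A, Δ⟩| ≤ (1/2) ‖A‖_* ‖Δ‖_op²`. -/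
theorem stmt1 {d : ℕ} (Qs Q Δ U V D A B : Matrix (Fin d) (Fin d) ℝ)
    (hQs : Qs ∈ Matrix.orthogonalGroup (Fin d) ℝ)
    (hQ : Q ∈ Matrix.orthogonalGroup (Fin d) ℝ)
    (hU : U ∈ Matrix.orthogonalGroup (Fin d) ℝ)
    (hV : V ∈ Matrix.orthogonalGroup (Fin d) ℝ)
    (hDdiag : ∀ i j, i ≠ j → D i j = 0)
    (hDpos : ∀ i, 0 ≤ D i i)
    (hA : A = U * D * Vᵀ)
    (hQsdef : Qs = U * Vᵀ)
    (hDelta : Q = Qs + Δ)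
    (hB : B = A * Qsᵀ) :
    mip A Δ = -(1 / 2) * mip B (Δ * Δᵀ) ∧
      |mip A Δ| ≤ (1 / 2) * nuclearNorm A * opNorm Δ ^ 2 := by
  rw [mem_orthogonalGroup_iff'] at hU hV
  have hQsQsT : Qs * Qsᵀ = 1 := (mem_orthogonalGroup_iff _ _).mp hQs
  have hQsTQs : Qsᵀ * Qs = 1 := (mem_orthogonalGroup_iff' _ _).mp hQs
  have hQQT : (Qs + Δ) * (Qs + Δ)ᵀ = 1 := hDelta ▸ (mem_orthogonalGroup_iff _ _).mp hQ
  obtain ⟨s, rfl⟩ : ∃ s, D = diagonal s :=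
    ⟨D.diag, ((isDiag_iff_diagonal_diag D).mp hDdiag).symm⟩
  have hs : ∀ i, 0 ≤ s i := fun i => by simpa using hDpos i
  have hBQs : B * Qs = A := by rw [hB, mul_assoc, hQsTQs, mul_one]
  have hBU : B = U * diagonal s * Uᵀ := by
    rw [hB, hA, hQsdef, transpose_mul, transpose_transpose, mul_assoc, ← mul_assoc Vᵀ, hV,
      one_mul]
  have hBsymm : Bᵀ = B := by
    rw [hBU]; simp only [transpose_mul, transpose_transpose, diagonal_transpose, mul_assoc]
  have hΔ := mul_transpose_add_add_mul_transpose_eq_zero hQsQsT hQQT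
  have hmip : mip B (Δ * Δᵀ) = -2 * mip A Δ := by
    rw [mip, mip, hBsymm, trace_mul_mul_transpose_eq_neg_two_mul hBsymm hΔ, hBQs]
  have hbound : |mip B (Δ * Δᵀ)| ≤ nuclearNorm A * opNorm Δ ^ 2 := by
    rw [mip, hBsymm, hA, nuclearNorm_mul_diagonal_mul_transpose hU hV hs, hBU]
    exact abs_trace_conj_diagonal_mul_mul_transpose_le hU hs Δ
  have hA_eq : mip A Δ = -(1 / 2) * mip B (Δ * Δᵀ) := by linarith
  refine ⟨hA_eq, ?_⟩
  rw [hA_eq, abs_mul, abs_neg, abs_of_pos (by norm_num : (0 : ℝ) < 1 / 2), mul_assoc]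
  exact mul_le_mul_of_nonneg_left hbound (by norm_num)
end

section
/- Let τ be a uniformly random permutation of [k] and L ≥ k ≥ 1. Then E[ L^{c(τ)} 1{τ is a derangement} ] ≤ binom(2k−1, k) (L/k)^{k/2} ≤ (16L/k)^{k/2}, where c(τ) is the number of cycles of τ. -/
/-- Total number of cycles of a permutation (cycles of length ≥ 2 plus fixed points). -/
def cyclesCount {k : ℕ} (τ : Equiv.Perm (Fin k)) : ℕ :=
  Multiset.card τ.cycleType + (Finset.univ.filter fun i => τ i = i).card

open Equiv Equiv.Perm Finset

variable {α : Type*} [Fintype α] [DecidableEq α]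

/-- generalized cycles count -/
def ccG (f : Perm α) : ℕ :=
  Multiset.card f.cycleType + (Finset.univ.filter fun i => f i = i).card

lemma filter_fixed_card (f : Perm α) :
    (Finset.univ.filter fun i => f i = i).card = Fintype.card α - f.support.card := by
  have h : (Finset.univ.filter fun i => f i = i) = f.supportᶜ := by
    ext i; simp [Equiv.Perm.mem_support, not_not]
  rw [h, Finset.card_compl]

lemma ccG_eq (f : Perm α) :
    ccG f = Multiset.card f.cycleType + (Fintype.card α - f.support.card) := by
  rw [ccG, filter_fixed_card]

lemma ccG_swap_mul (f : Perm α) (x : α) (hx : f x ≠ x) :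
    ccG (swap x (f x) * f) = ccG f + 1 := by
  classical
  set c := f.cycleOf x with hc
  have hcf : c ∈ f.cycleFactorsFinset :=
    (cycleOf_mem_cycleFactorsFinset_iff).2 (mem_support.2 hx)
  have hdisj : Disjoint (f * c⁻¹) c := disjoint_mul_inv_of_mem_cycleFactorsFinset hcf
  set g := f * c⁻¹ with hg
  have hfg : f = g * c := by rw [hg]; group
  have hfcg : f = c * g := by rw [hfg, (hdisj.commute).eq]
  have hcyc : IsCycle c := isCycle_cycleOf f hx
  have hcx : c x = f x := cycleOf_apply_self f x
  have hccx : c (c x) = f (f x) := by rw [hcx]; exact cycleOf_apply_apply_self f x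
  have hct : Multiset.card f.cycleType = Multiset.card g.cycleType + 1 := by
    rw [hfg, hdisj.cycleType_mul, hcyc.cycleType]
    simp [add_comm]
  have hsupp : f.support.card = g.support.card + c.support.card := by
    rw [hfg, hdisj.support_mul, Finset.card_union_of_disjoint
      (disjoint_iff_disjoint_support.1 hdisj)]
  have hsle : f.support.card ≤ Fintype.card α := Finset.card_le_univ _
  by_cases h2 : f (f x) = x
  · -- c is a transposition; swap x (f x) * f = g
    have hcswap' : c = swap x (f x) := by
      have := hcyc.eq_swap_of_apply_apply_eq_self (by rw [hcx]; exact hx)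
        (by rw [hccx]; exact h2)
      rwa [hcx] at this
    have hσ : swap x (f x) * f = g := by
      calc swap x (f x) * f = c * f := by rw [← hcswap']
        _ = c * (c * g) := by rw [← hfcg]
        _ = g := by rw [← mul_assoc, hcswap', swap_mul_self, one_mul]
    have hc2 : c.support.card = 2 := by rw [hcswap']; exact card_support_swap (Ne.symm hx)
    rw [hσ, ccG_eq, ccG_eq]
    omega
  · have hccx' : c (c x) ≠ x := by rw [hccx]; exact h2
    have hcxne : c x ≠ x := by rw [hcx]; exact hx
    have hc'cyc : IsCycle (swap x (c x) * c) := hcyc.swap_mul hcxne hccx'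
    have hσ : swap x (f x) * f = (swap x (c x) * c) * g := by
      rw [← hcx, hfcg, mul_assoc]
    have hd' : Disjoint (swap x (c x) * c) g := by
      rw [disjoint_iff_disjoint_support]
      have h1 : (swap x (c x) * c).support = c.support \ {x} :=
        support_swap_mul_eq c x hccx'
      have h2' : _root_.Disjoint c.support g.support :=
        (disjoint_iff_disjoint_support.1 hdisj).symm
      exact h2'.mono_left (by rw [h1]; exact Finset.sdiff_subset)
    have hctσ : Multiset.card ((swap x (f x) * f).cycleType)
        = Multiset.card g.cycleType + 1 := by
      rw [hσ, hd'.cycleType_mul, hc'cyc.cycleType]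
      simp [add_comm]
    have hsσ : (swap x (f x) * f).support.card = f.support.card - 1 := by
      rw [support_swap_mul_eq f x h2, Finset.sdiff_singleton_eq_erase,
        Finset.card_erase_of_mem (mem_support.2 hx)]
    have hx1 : 1 ≤ f.support.card := Finset.card_pos.2 ⟨x, mem_support.2 hx⟩
    rw [ccG_eq, ccG_eq, hctσ, hsσ]
    omega

def succEquivNe (n : ℕ) : Fin n ≃ {x : Fin (n+1) // x ≠ 0} where
  toFun j := ⟨j.succ, Fin.succ_ne_zero j⟩
  invFun x := x.1.pred x.2
  left_inv j := by simp
  right_inv x := by simp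

lemma ccG_decomposeFin {n : ℕ} (p : Fin (n+1)) (e : Perm (Fin n)) :
    ccG (Equiv.Perm.decomposeFin.symm (p, e)) = ccG e + if p = 0 then 1 else 0 := by
  classical
  set E := Equiv.Perm.decomposeFin.symm ((0 : Fin (n+1)), e) with hE
  have hE0 : E 0 = 0 := by rw [hE, Equiv.Perm.decomposeFin_symm_apply_zero]
  have hEs : ∀ j : Fin n, E j.succ = (e j).succ := by
    intro j
    rw [hE, Equiv.Perm.decomposeFin_symm_apply_succ]
    simp [Equiv.swap_self]
  have hED : E = e.extendDomain (succEquivNe n) := by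
    ext i
    refine Fin.cases ?_ ?_ i
    · rw [hE0, Equiv.Perm.extendDomain_apply_not_subtype]
      simp
    · intro j
      rw [hEs j]
      exact congrArg Fin.val
        (Equiv.Perm.extendDomain_apply_image (e := e) (f := succEquivNe n) j).symm
  have hfix : (Finset.univ.filter fun i => E i = i).card
      = (Finset.univ.filter fun i => e i = i).card + 1 := by
    rw [Finset.card_filter, Finset.card_filter, Fin.sum_univ_succ]
    simp [hE0, hEs, Fin.succ_inj, add_comm]
  have hccE : ccG E = ccG e + 1 := by
    rw [ccG, ccG, hED, Equiv.Perm.cycleType_extendDomain, ← hED, hfix]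
    ring
  by_cases hp : p = 0
  · subst hp; simpa [← hE] using hccE
  · have hsymm : Equiv.Perm.decomposeFin.symm (p, e) = swap 0 p * E := by
      ext i
      refine Fin.cases ?_ ?_ i
      · rw [Equiv.Perm.decomposeFin_symm_apply_zero]
        simp [hE0]
      · intro j
        rw [Equiv.Perm.decomposeFin_symm_apply_succ]
        simp [hEs j]
    set τ := swap 0 p * E with hτ
    have hτ0 : τ 0 = p := by simp [hτ, hE0]
    have := ccG_swap_mul τ 0 (by rw [hτ0]; exact hp)
    rw [hτ0] at this
    have hback : swap 0 p * τ = E := by rw [hτ, ← mul_assoc, swap_mul_self, one_mul]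
    rw [hback] at this
    rw [hsymm, if_neg hp]
    omega

lemma sum_pow_ccG (n : ℕ) (x : ℝ) :
    ∑ σ : Perm (Fin n), x ^ ccG σ = ∏ j ∈ Finset.range n, (x + j) := by
  induction n with
  | zero =>
    have h1 : ∀ σ : Perm (Fin 0), x ^ ccG σ = 1 := by
      intro σ
      have hσ : σ = 1 := Subsingleton.elim _ _
      subst hσ
      simp [ccG, Equiv.Perm.cycleType_one]
    simp [h1]
  | succ n ih =>
    calc ∑ σ : Perm (Fin (n+1)), x ^ ccG σ
        = ∑ pe : Fin (n+1) × Perm (Fin n), x ^ ccG (Equiv.Perm.decomposeFin.symm pe) :=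
          (Equiv.sum_comp Equiv.Perm.decomposeFin.symm _).symm
      _ = ∑ p : Fin (n+1), ∑ e : Perm (Fin n), x ^ ccG e * (if p = 0 then x else 1) := by
          rw [Fintype.sum_prod_type]
          refine Finset.sum_congr rfl fun p _ => Finset.sum_congr rfl fun e _ => ?_
          rw [ccG_decomposeFin, pow_add]
          by_cases hp : p = 0 <;> simp [hp]
      _ = ∑ p : Fin (n+1), (if p = 0 then x else 1) * ∑ e : Perm (Fin n), x ^ ccG e := by
          refine Finset.sum_congr rfl fun p _ => ?_
          rw [← Finset.sum_mul, mul_comm]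
      _ = (∑ p : Fin (n+1), (if p = 0 then x else 1)) * ∑ e : Perm (Fin n), x ^ ccG e := by
          rw [← Finset.sum_mul]
      _ = (x + n) * ∏ j ∈ Finset.range n, (x + j) := by
          rw [ih]
          congr 1
          rw [Fin.sum_univ_succ]
          simp [Fin.succ_ne_zero, Finset.card_univ]
      _ = ∏ j ∈ Finset.range (n+1), (x + j) := by
          rw [Finset.prod_range_succ]
          ring

lemma prod_range_add_eq_ascFactorial (n m : ℕ) :
    (∏ j ∈ Finset.range m, (n + j)) = n.ascFactorial m := by
  induction m with
  | zero => simp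
  | succ m ih => rw [Finset.prod_range_succ, ih, Nat.ascFactorial_succ, mul_comm]

/-- For a uniformly random permutation `τ` of `[k]` and `L ≥ k ≥ 1`,
`E[L^{c(τ)} 1{τ derangement}] ≤ C(2k-1,k) (L/k)^{k/2} ≤ (16L/k)^{k/2}`. -/
theorem stmt12 (k : ℕ) (hk : 1 ≤ k) (L : ℝ) (hL : (k : ℝ) ≤ L) :
    (∑ τ : Equiv.Perm (Fin k), if ∀ i, τ i ≠ i then L ^ cyclesCount τ else 0)
        / (Nat.factorial k : ℝ)
      ≤ (Nat.choose (2 * k - 1) k : ℝ) * (L / k) ^ ((k : ℝ) / 2) ∧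
    (Nat.choose (2 * k - 1) k : ℝ) * (L / k) ^ ((k : ℝ) / 2)
      ≤ (16 * L / k) ^ ((k : ℝ) / 2) := by
  have hk0 : (0:ℝ) < k := by exact_mod_cast hk
  have hLk : (1:ℝ) ≤ L / k := (one_le_div hk0).2 hL
  have hLk0 : (0:ℝ) ≤ L / k := by linarith
  have hr0 : (0:ℝ) ≤ (L/(k:ℝ)) ^ ((k:ℝ)/2) := Real.rpow_nonneg hLk0 _
  set r := (L / (k:ℝ)) ^ ((k:ℝ)/2) with hrdef
  constructor
  · rw [div_le_iff₀ (by positivity : (0:ℝ) < (Nat.factorial k : ℝ))]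
    have key : ∀ τ : Equiv.Perm (Fin k), (if ∀ i, τ i ≠ i then L ^ cyclesCount τ else 0)
        ≤ (k:ℝ) ^ cyclesCount τ * r := by
      intro τ
      by_cases hd : ∀ i, τ i ≠ i
      · rw [if_pos hd]
        have hfix : (Finset.univ.filter fun i => τ i = i) = ∅ := by
          ext i; simp [hd i]
        have hsupport : τ.support = Finset.univ := by
          ext i; simp [Equiv.Perm.mem_support, hd i]
        have hcc : cyclesCount τ = Multiset.card τ.cycleType := by
          simp [cyclesCount, hfix]
        have h2cc : 2 * Multiset.card τ.cycleType ≤ k := by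
          have h := Multiset.card_nsmul_le_sum
            (fun x hx => Equiv.Perm.two_le_of_mem_cycleType (σ := τ) hx)
          rw [Equiv.Perm.sum_cycleType, hsupport, Finset.card_univ, Fintype.card_fin,
            smul_eq_mul] at h
          omega
        have hccr : (cyclesCount τ : ℝ) ≤ (k:ℝ)/2 := by
          rw [hcc]
          have : ((2 * Multiset.card τ.cycleType : ℕ) : ℝ) ≤ (k:ℝ) := by exact_mod_cast h2cc
          push_cast at this
          linarith
        calc L ^ cyclesCount τ = ((k:ℝ) * (L/k)) ^ cyclesCount τ := by
              rw [mul_comm, div_mul_cancel₀ _ (ne_of_gt hk0)]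
          _ = (k:ℝ) ^ cyclesCount τ * (L/k) ^ cyclesCount τ := mul_pow _ _ _
          _ ≤ (k:ℝ) ^ cyclesCount τ * r := by
              refine mul_le_mul_of_nonneg_left ?_ (pow_nonneg (le_of_lt hk0) _)
              rw [← Real.rpow_natCast (L/(k:ℝ)) (cyclesCount τ)]
              exact Real.rpow_le_rpow_of_exponent_le hLk hccr
      · rw [if_neg hd]
        exact mul_nonneg (pow_nonneg (le_of_lt hk0) _) hr0
    have hsum := Finset.sum_le_sum (s := Finset.univ) (fun τ _ => key τ)
    refine hsum.trans (le_of_eq ?_)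
    rw [← Finset.sum_mul]
    have hidsum : ∑ τ : Equiv.Perm (Fin k), (k:ℝ) ^ cyclesCount τ
        = ((Nat.factorial k * Nat.choose (2*k-1) k : ℕ) : ℝ) := by
      have h1 := sum_pow_ccG k (k:ℝ)
      rw [show (∑ τ : Equiv.Perm (Fin k), (k:ℝ) ^ cyclesCount τ)
          = ∑ τ : Equiv.Perm (Fin k), (k:ℝ) ^ ccG τ from rfl, h1]
      rw [show (∏ j ∈ Finset.range k, ((k:ℝ) + j))
          = ((∏ j ∈ Finset.range k, (k + j) : ℕ) : ℝ) by push_cast; rfl]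
      rw [prod_range_add_eq_ascFactorial, Nat.ascFactorial_eq_factorial_mul_choose']
      congr 3
      omega
    rw [hidsum]
    push_cast
    ring
  · have h4 : ((Nat.choose (2*k-1) k : ℕ) : ℝ) ≤ (4:ℝ)^k := by
      have h1 : Nat.choose (2*k-1) k ≤ 2 ^ (2*k-1) := by
        calc Nat.choose (2*k-1) k
            ≤ ∑ i ∈ Finset.range (2*k-1+1), Nat.choose (2*k-1) i :=
              Finset.single_le_sum (fun i _ => Nat.zero_le _) (Finset.mem_range.2 (by omega))
          _ = 2^(2*k-1) := Nat.sum_range_choose _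
      have h2 : (2:ℕ) ^ (2*k-1) ≤ 2 ^ (2*k) := Nat.pow_le_pow_right (by norm_num) (by omega)
      calc ((Nat.choose (2*k-1) k : ℕ) : ℝ) ≤ (((2:ℕ)^(2*k) : ℕ) : ℝ) := by
            exact_mod_cast h1.trans h2
        _ = (4:ℝ)^k := by push_cast; rw [pow_mul]; norm_num
    have h16 : (16:ℝ) ^ ((k:ℝ)/2) = (4:ℝ)^k := by
      have h160 : (16:ℝ) = (4:ℝ) ^ (2:ℝ) := by
        rw [show (2:ℝ) = ((2:ℕ):ℝ) by norm_num, Real.rpow_natCast]; norm_num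
      rw [h160, ← Real.rpow_mul (by norm_num : (0:ℝ) ≤ 4),
        show (2:ℝ) * ((k:ℝ)/2) = (k:ℝ) by ring, Real.rpow_natCast]
    have hrhs : (16 * L / (k:ℝ)) ^ ((k:ℝ)/2) = (16:ℝ)^((k:ℝ)/2) * r := by
      rw [show (16 * L / (k:ℝ)) = 16 * (L / k) by ring,
        Real.mul_rpow (by norm_num) hLk0]
    rw [hrhs, h16]
    exact mul_le_mul_of_nonneg_right h4 hr0
end

section
/- Let G = (V, E) be a finite simple graph. Then G contains an independent set of size at least |V|² / (2|E| + |V|). -/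
open Finset

lemma caroWei {V : Type*} [Fintype V] [DecidableEq V] (G : SimpleGraph V)
    [DecidableRel G.Adj] :
    ∀ n : ℕ, ∀ s : Finset V, s.card ≤ n →
    ∃ t : Finset V, t ⊆ s ∧ (∀ a ∈ t, ∀ b ∈ t, ¬ G.Adj a b) ∧
      ∑ v ∈ s, (1 : ℝ) / ((G.neighborFinset v ∩ s).card + 1) ≤ t.card := by
  intro n
  induction n with
  | zero =>
    intro s hs
    have : s = ∅ := Finset.card_eq_zero.mp (Nat.le_zero.mp hs)
    subst this
    exact ⟨∅, Finset.Subset.refl _, by simp, by simp⟩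
  | succ n ih =>
    intro s hs
    rcases s.eq_empty_or_nonempty with rfl | hne
    · exact ⟨∅, Finset.Subset.refl _, by simp, by simp⟩
    obtain ⟨v, hv, hmin⟩ := Finset.exists_min_image s
      (fun v => ((G.neighborFinset v ∩ s).card : ℕ)) hne
    set N : Finset V := insert v (G.neighborFinset v ∩ s) with hN
    have hNs : N ⊆ s := by
      intro u hu
      rcases Finset.mem_insert.mp hu with rfl | hu
      · exact hv
      · exact (Finset.mem_inter.mp hu).2
    set s' : Finset V := s \ N with hs'
    have hs's : s' ⊆ s := Finset.sdiff_subset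
    have hvN : v ∈ N := Finset.mem_insert_self _ _
    have hcard' : s'.card ≤ n := by
      have : s'.card < s.card := Finset.card_lt_card
        (Finset.ssubset_iff_of_subset hs's |>.mpr ⟨v, hv, by simp [hs', hvN]⟩)
      omega
    obtain ⟨t', ht's, ht'ind, ht'sum⟩ := ih s' hcard'
    have hvt' : v ∉ t' := fun h => (Finset.mem_sdiff.mp (ht's h)).2 hvN
    refine ⟨insert v t', ?_, ?_, ?_⟩
    · intro u hu
      rcases Finset.mem_insert.mp hu with rfl | hu
      · exact hv
      · exact hs's (ht's hu)
    · have key : ∀ b ∈ t', ¬ G.Adj v b := by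
        intro b hb hab
        have hbs : b ∈ s := hs's (ht's hb)
        have : b ∈ N := Finset.mem_insert_of_mem
          (Finset.mem_inter.mpr ⟨(G.mem_neighborFinset _ _).mpr hab, hbs⟩)
        exact (Finset.mem_sdiff.mp (ht's hb)).2 this
      intro a ha b hb hab
      rcases Finset.mem_insert.mp ha with ha' | ha
      · rcases Finset.mem_insert.mp hb with hb' | hb
        · rw [ha', hb'] at hab; exact G.irrefl hab
        · rw [ha'] at hab; exact key b hb hab
      · rcases Finset.mem_insert.mp hb with hb' | hb
        · rw [hb'] at hab; exact key a ha hab.symm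
        · exact ht'ind a ha b hb hab
    · -- key sum inequality
      have hsplit : ∑ u ∈ s, (1 : ℝ) / ((G.neighborFinset u ∩ s).card + 1)
          = ∑ u ∈ N, (1 : ℝ) / ((G.neighborFinset u ∩ s).card + 1)
            + ∑ u ∈ s', (1 : ℝ) / ((G.neighborFinset u ∩ s).card + 1) := by
        rw [hs', ← Finset.sum_sdiff hNs]; ring
      have hNcard : (N.card : ℝ) = (G.neighborFinset v ∩ s).card + 1 := by
        have : v ∉ G.neighborFinset v ∩ s := by simp
        rw [hN, Finset.card_insert_of_notMem this]; push_cast; ring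
      have h1 : ∑ u ∈ N, (1 : ℝ) / ((G.neighborFinset u ∩ s).card + 1) ≤ 1 := by
        have hb : ∀ u ∈ N, (1 : ℝ) / ((G.neighborFinset u ∩ s).card + 1)
            ≤ 1 / ((G.neighborFinset v ∩ s).card + 1) := by
          intro u hu
          apply one_div_le_one_div_of_le
          · positivity
          · have := hmin u (hNs hu)
            exact_mod_cast by exact_mod_cast add_le_add_left (Nat.cast_le.mpr this) (1:ℝ)
        calc ∑ u ∈ N, (1 : ℝ) / ((G.neighborFinset u ∩ s).card + 1)
            ≤ ∑ u ∈ N, (1 : ℝ) / ((G.neighborFinset v ∩ s).card + 1) :=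
              Finset.sum_le_sum hb
          _ = N.card * (1 / ((G.neighborFinset v ∩ s).card + 1)) := by
              rw [Finset.sum_const, nsmul_eq_mul]
          _ = 1 := by
              rw [hNcard]; field_simp
      have h2 : ∑ u ∈ s', (1 : ℝ) / ((G.neighborFinset u ∩ s).card + 1)
          ≤ ∑ u ∈ s', (1 : ℝ) / ((G.neighborFinset u ∩ s').card + 1) := by
        apply Finset.sum_le_sum
        intro u hu
        apply one_div_le_one_div_of_le
        · positivity
        · have : (G.neighborFinset u ∩ s').card ≤ (G.neighborFinset u ∩ s).card :=
            Finset.card_le_card (Finset.inter_subset_inter_left hs's)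
          exact add_le_add_left (Nat.cast_le.mpr this) 1
      have hcardt : ((insert v t').card : ℝ) = t'.card + 1 := by
        rw [Finset.card_insert_of_notMem hvt']; push_cast; ring
      rw [hsplit, hcardt]
      linarith
  
/-- Every finite simple graph contains an independent set of size at least
`|V|² / (2|E| + |V|)` (Turán / Caro–Wei bound). -/
theorem stmt17 {V : Type*} [Fintype V] [DecidableEq V] (G : SimpleGraph V)
    [DecidableRel G.Adj] :
    ∃ s : Finset V, (∀ a ∈ s, ∀ b ∈ s, ¬ G.Adj a b) ∧
      ((Fintype.card V : ℝ) ^ 2) / (2 * G.edgeFinset.card + Fintype.card V)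
        ≤ (s.card : ℝ) := by
  obtain ⟨t, -, htind, htsum⟩ := caroWei G (Fintype.card V) Finset.univ (by simp)
  refine ⟨t, htind, ?_⟩
  have hcw : (∑ v : V, (1 : ℝ)) ^ 2 / (∑ v : V, ((G.degree v : ℝ) + 1))
      ≤ ∑ v : V, (1 : ℝ) ^ 2 / ((G.degree v : ℝ) + 1) :=
    sq_sum_div_le_sum_sq_div _ _ (fun v _ => by positivity)
  have hden : (∑ v : V, ((G.degree v : ℝ) + 1))
      = 2 * G.edgeFinset.card + Fintype.card V := by
    rw [Finset.sum_add_distrib, Finset.sum_const, nsmul_eq_mul, mul_one,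
      Finset.card_univ]
    norm_cast
    rw [← SimpleGraph.sum_degrees_eq_twice_card_edges]
  have hnum : (∑ v : V, (1 : ℝ)) = Fintype.card V := by simp
  have hsum2 : ∑ v : V, (1 : ℝ) ^ 2 / ((G.degree v : ℝ) + 1) ≤ (t.card : ℝ) := by
    have heq : ∀ v : V, (1 : ℝ) ^ 2 / ((G.degree v : ℝ) + 1)
        = 1 / (((G.neighborFinset v ∩ Finset.univ).card : ℝ) + 1) := by
      intro v
      rw [one_pow, Finset.inter_univ, G.card_neighborFinset_eq_degree]
    rw [Finset.sum_congr rfl fun v _ => heq v]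
    exact htsum
  calc ((Fintype.card V : ℝ) ^ 2) / (2 * G.edgeFinset.card + Fintype.card V)
      = (∑ v : V, (1 : ℝ)) ^ 2 / (∑ v : V, ((G.degree v : ℝ) + 1)) := by
        rw [hnum, hden]
    _ ≤ ∑ v : V, (1 : ℝ) ^ 2 / ((G.degree v : ℝ) + 1) := hcw
    _ ≤ (t.card : ℝ) := hsum2
end
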